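/- With the same mesh and damping setup, consider the semi-implicit scheme h_i (U_i^{n+1} − 2U_i^n + U_i^{n−1})/Δt² − (1/2)[ℓ_{i+1/2}(U_{i+1}^{n+1} − U_i^{n+1}) − ℓ_{i−1/2}(U_i^{n+1} − U_{i−1}^{n+1})] − (1/2)[ℓ_{i+1/2}(U_{i+1}^{n−1} − U_i^{n−1}) − ℓ_{i−1/2}(U_i^{n−1} − U_{i−1}^{n−1})] = rhs_i. Define E^n = (1/2)∑_i h_i((U_i^{n+1} − U_i^n)/Δt)² + (1/4)∑_{i=0}^{Nmax} ℓ_{i+1/2}(U_{i+1}^{n+1} − U_i^{n+1})² + (1/4)∑_{i=0}^{Nmax} ℓ_{i+1/2}(U_{i+1}^n − U_i^n)². Then E^n − E^{n−1} = −δ Δt h ∑_{i=N_α+1}^{N_α+N−1} ((U_{i+1}^{n+1} − U_i^{n+1} − U_{i+1}^{n−1} + U_i^{n−1})/(2Δt h))² ≤ 0. -/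

import Mathlib

open Finset

/-- The right-hand side (Kelvin-Voigt damping term) of the finite volume scheme,
built from the solution at time levels `n+1` (`Up`) and `n-1` (`Um`). -/
noncomputable def rhsKV (δ Δt h : ℝ) (Nα N : ℕ) (Up Um : ℕ → ℝ) (i : ℕ) : ℝ :=
  if i = Nα + 1 then
    δ / (2 * Δt) * ((Up (i + 1) - Up i) / h - (Um (i + 1) - Um i) / h)
  else if Nα + 2 ≤ i ∧ i ≤ Nα + N - 1 then
    δ / (2 * Δt) * ((Up (i + 1) - Up i) / h - (Um (i + 1) - Um i) / h
      - (Up i - Up (i - 1)) / h + (Um i - Um (i - 1)) / h)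
  else if i = Nα + N then
    -(δ / (2 * Δt)) * ((Up i - Up (i - 1)) / h - (Um i - Um (i - 1)) / h)
  else 0

/-- Discrete energy of the semi-implicit finite volume scheme, at time level `n`,
built from the solution at time levels `n` (`Un`) and `n+1` (`Unp`). -/
noncomputable def energyImp (Δt : ℝ) (hi ℓ : ℕ → ℝ) (Nmax : ℕ) (Un Unp : ℕ → ℝ) : ℝ :=
  (1 / 2) * ∑ i ∈ Icc 1 Nmax, hi i * ((Unp i - Un i) / Δt) ^ 2 +
    (1 / 4) * ∑ i ∈ range (Nmax + 1), ℓ i * (Unp (i + 1) - Unp i) ^ 2 +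
    (1 / 4) * ∑ i ∈ range (Nmax + 1), ℓ i * (Un (i + 1) - Un i) ^ 2

/-!
Test the scheme with the centred time difference `U^{n+2} - U^n` and sum over the cells.
The inertia term telescopes into the difference of the kinetic energies, and summation by
parts turns the two averaged stiffness terms into the difference of the potential energies
at levels `n+2` and `n` (the level `n+1` potential appears in both energies and cancels).
The Kelvin-Voigt right-hand side is a discrete divergence of a flux supported on the damped
cells, so summation by parts turns it into minus a sum of squares.
-/

theorem sum_Icc_one_eq_sum_range_succ {A : Type*} [AddCommMonoid A] (M : ℕ) (f : ℕ → A)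
    (h0 : f 0 = 0) :
    ∑ i ∈ Icc 1 M, f i = ∑ i ∈ range (M + 1), f i := by
  rw [range_eq_Ico, sum_eq_sum_Ico_succ_bot (Nat.succ_pos M), h0, zero_add]
  rfl

theorem sum_Icc_mul_sub_eq_neg_sum_range_sub_mul {R : Type*} [CommRing R] (M : ℕ)
    (W a : ℕ → R) (h0 : W 0 = 0) (hM : W (M + 1) = 0) :
    ∑ i ∈ Icc 1 M, W i * (a i - a (i - 1)) =
      -∑ i ∈ range (M + 1), (W (i + 1) - W i) * a i := by
  have htel : ∑ i ∈ range (M + 1), (W (i + 1) * a i - W i * a (i - 1)) = 0 := by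
    simpa [h0, hM] using sum_range_sub (fun i => W i * a (i - 1)) (M + 1)
  rw [sum_Icc_one_eq_sum_range_succ M _ (by simp [h0]), eq_neg_iff_add_eq_zero,
    ← sum_add_distrib, ← htel]
  exact sum_congr rfl fun i _ => by ring

theorem energyImp_sub_eq (Δt : ℝ) (hΔt : Δt ≠ 0) (hi ℓ : ℕ → ℝ) (M : ℕ)
    (u₀ u₁ u₂ R : ℕ → ℝ) (h0 : u₂ 0 = u₀ 0) (hM : u₂ (M + 1) = u₀ (M + 1))
    (hscheme : ∀ i ∈ Icc 1 M,
      hi i * (u₂ i - 2 * u₁ i + u₀ i) / Δt ^ 2 -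
        (1 / 2) * (ℓ i * (u₂ (i + 1) - u₂ i) - ℓ (i - 1) * (u₂ i - u₂ (i - 1))) -
        (1 / 2) * (ℓ i * (u₀ (i + 1) - u₀ i) - ℓ (i - 1) * (u₀ i - u₀ (i - 1))) = R i) :
    energyImp Δt hi ℓ M u₁ u₂ - energyImp Δt hi ℓ M u₀ u₁ =
      (1 / 2) * ∑ i ∈ Icc 1 M, (u₂ i - u₀ i) * R i := by
  set V := fun i => u₂ i - u₀ i
  set F := fun i => ℓ i * (u₂ (i + 1) - u₂ i + (u₀ (i + 1) - u₀ i))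
  have hkin : ∑ i ∈ Icc 1 M, hi i * ((u₂ i - u₁ i) / Δt) ^ 2 -
        ∑ i ∈ Icc 1 M, hi i * ((u₁ i - u₀ i) / Δt) ^ 2 =
      ∑ i ∈ Icc 1 M, V i * (hi i * (u₂ i - 2 * u₁ i + u₀ i) / Δt ^ 2) := by
    rw [← sum_sub_distrib]
    refine sum_congr rfl fun i _ => ?_
    field_simp
    ring
  have hpot : ∑ i ∈ range (M + 1), ℓ i * (u₂ (i + 1) - u₂ i) ^ 2 -
        ∑ i ∈ range (M + 1), ℓ i * (u₀ (i + 1) - u₀ i) ^ 2 =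
      ∑ i ∈ range (M + 1), (V (i + 1) - V i) * F i := by
    rw [← sum_sub_distrib]
    exact sum_congr rfl fun i _ => by ring
  have hparts := sum_Icc_mul_sub_eq_neg_sum_range_sub_mul M V F (sub_eq_zero.mpr h0)
    (sub_eq_zero.mpr hM)
  have hsum : ∑ i ∈ Icc 1 M, V i * (hi i * (u₂ i - 2 * u₁ i + u₀ i) / Δt ^ 2) -
        (1 / 2) * ∑ i ∈ Icc 1 M, V i * (F i - F (i - 1)) = ∑ i ∈ Icc 1 M, V i * R i := by
    rw [mul_sum, ← sum_sub_distrib]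
    refine sum_congr rfl fun i hmem => ?_
    have hi1 : i - 1 + 1 = i := Nat.sub_add_cancel (mem_Icc.mp hmem).1
    rw [← hscheme i hmem]
    simp only [V, F, hi1]
    ring
  unfold energyImp
  linear_combination (1 / 2) * hkin + (1 / 4) * hpot + (1 / 4) * hparts + (1 / 2) * hsum

noncomputable def kvFlux (h : ℝ) (Nα N : ℕ) (Up Um : ℕ → ℝ) (i : ℕ) : ℝ :=
  if i ∈ Icc (Nα + 1) (Nα + N - 1) then (Up (i + 1) - Up i - Um (i + 1) + Um i) / h else 0

theorem rhsKV_eq_sub_kvFlux (δ Δt h : ℝ) (Nα N : ℕ) (hN : 2 ≤ N) (Up Um : ℕ → ℝ) (i : ℕ) :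
    rhsKV δ Δt h Nα N Up Um i =
      δ / (2 * Δt) * (kvFlux h Nα N Up Um i - kvFlux h Nα N Up Um (i - 1)) := by
  rcases i with _ | j <;>
  · simp only [rhsKV, kvFlux, mem_Icc, Nat.add_sub_cancel]
    split_ifs <;> first | omega | contradiction | ring

theorem sum_mul_rhsKV (δ Δt h : ℝ) (Nα N M : ℕ) (hN : 2 ≤ N) (hNM : Nα + N ≤ M + 1)
    (Up Um : ℕ → ℝ) (h0 : Up 0 = Um 0) (hM : Up (M + 1) = Um (M + 1)) :
    ∑ i ∈ Icc 1 M, (Up i - Um i) * rhsKV δ Δt h Nα N Up Um i =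
      -(δ / (2 * Δt * h)) *
        ∑ i ∈ Icc (Nα + 1) (Nα + N - 1), (Up (i + 1) - Up i - Um (i + 1) + Um i) ^ 2 := by
  set V := fun i => Up i - Um i
  set g := kvFlux h Nα N Up Um
  have hsupp : Icc (Nα + 1) (Nα + N - 1) ⊆ range (M + 1) := fun i hi => by
    rw [mem_Icc] at hi
    rw [mem_range]
    omega
  calc ∑ i ∈ Icc 1 M, (Up i - Um i) * rhsKV δ Δt h Nα N Up Um i
      = δ / (2 * Δt) * ∑ i ∈ Icc 1 M, V i * (g i - g (i - 1)) := by
        rw [mul_sum]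
        exact sum_congr rfl fun i _ => by rw [rhsKV_eq_sub_kvFlux δ Δt h Nα N hN]; ring
    _ = -(δ / (2 * Δt)) * ∑ i ∈ range (M + 1), (V (i + 1) - V i) * g i := by
        rw [sum_Icc_mul_sub_eq_neg_sum_range_sub_mul M V g (sub_eq_zero.mpr h0)
          (sub_eq_zero.mpr hM)]
        ring
    _ = _ := by
        simp only [g, kvFlux, mul_ite, mul_zero]
        rw [sum_ite_mem, inter_eq_right.mpr hsupp, mul_sum, mul_sum]
        exact sum_congr rfl fun i _ => by simp only [V]; ring

theorem implicit_scheme_energy_dissipation_general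
    (Nmax Nα N : ℕ) (hNN : 2 ≤ N) (hsum : Nα + N ≤ Nmax)
    (Δt δ h : ℝ) (hΔt : 0 < Δt) (hδ : 0 ≤ δ) (hh : 0 < h)
    (hi : ℕ → ℝ)
    (ℓ : ℕ → ℝ)
    (U : ℕ → ℕ → ℝ)
    (hbd : ∀ n, U n 0 = 0 ∧ U n (Nmax + 1) = 0)
    (hscheme : ∀ n, ∀ i ∈ Icc 1 Nmax,
      hi i * (U (n + 2) i - 2 * U (n + 1) i + U n i) / Δt ^ 2 -
        (1 / 2) * (ℓ i * (U (n + 2) (i + 1) - U (n + 2) i) -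
          ℓ (i - 1) * (U (n + 2) i - U (n + 2) (i - 1))) -
        (1 / 2) * (ℓ i * (U n (i + 1) - U n i) -
          ℓ (i - 1) * (U n i - U n (i - 1))) =
        rhsKV δ Δt h Nα N (U (n + 2)) (U n) i) :
    ∀ n,
      energyImp Δt hi ℓ Nmax (U (n + 1)) (U (n + 2)) -
          energyImp Δt hi ℓ Nmax (U n) (U (n + 1)) =
        -(δ * Δt * h) * ∑ i ∈ Icc (Nα + 1) (Nα + N - 1),
          ((U (n + 2) (i + 1) - U (n + 2) i - U n (i + 1) + U n i) /
              (2 * Δt * h)) ^ 2 ∧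
      energyImp Δt hi ℓ Nmax (U (n + 1)) (U (n + 2)) ≤
        energyImp Δt hi ℓ Nmax (U n) (U (n + 1)) := by
  intro n
  have h0 : U (n + 2) 0 = U n 0 := by rw [(hbd _).1, (hbd _).1]
  have hM : U (n + 2) (Nmax + 1) = U n (Nmax + 1) := by rw [(hbd _).2, (hbd _).2]
  have hdiss : energyImp Δt hi ℓ Nmax (U (n + 1)) (U (n + 2)) -
      energyImp Δt hi ℓ Nmax (U n) (U (n + 1)) =
        -(δ * Δt * h) * ∑ i ∈ Icc (Nα + 1) (Nα + N - 1),
          ((U (n + 2) (i + 1) - U (n + 2) i - U n (i + 1) + U n i) / (2 * Δt * h)) ^ 2 := by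
    rw [energyImp_sub_eq Δt hΔt.ne' hi ℓ Nmax _ _ _ _ h0 hM (hscheme n),
      sum_mul_rhsKV δ Δt h Nα N Nmax hNN (by omega) _ _ h0 hM]
    simp_rw [div_pow, ← sum_div]
    field_simp
  refine ⟨hdiss, sub_nonpos.mp ?_⟩
  rw [hdiss]
  exact mul_nonpos_of_nonpos_of_nonneg (neg_nonpos.mpr (by positivity))
    (sum_nonneg fun i _ => sq_nonneg _)

/-- Dissipation of the discrete energy for the semi-implicit finite volume scheme
with localized Kelvin-Voigt damping: the energy decrement equals the nonpositive
dissipation term, so the energy is non-increasing.  The scheme is stated at time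
level `n+1` (relating levels `n+2`, `n+1`, `n`). -/
theorem implicit_scheme_energy_dissipation
    (Nmax Nα N : ℕ) (hNα : 1 ≤ Nα) (hNN : 2 ≤ N) (hsum : Nα + N ≤ Nmax)
    (Δt δ h : ℝ) (hΔt : 0 < Δt) (hδ : 0 ≤ δ) (hh : 0 < h)
    (hi : ℕ → ℝ) (hipos : ∀ i ∈ Icc 1 Nmax, 0 < hi i)
    (ℓ : ℕ → ℝ) (hℓpos : ∀ i ∈ range (Nmax + 1), 0 < ℓ i)
    (U : ℕ → ℕ → ℝ)
    (hbd : ∀ n, U n 0 = 0 ∧ U n (Nmax + 1) = 0)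
    (hscheme : ∀ n, ∀ i ∈ Icc 1 Nmax,
      hi i * (U (n + 2) i - 2 * U (n + 1) i + U n i) / Δt ^ 2 -
        (1 / 2) * (ℓ i * (U (n + 2) (i + 1) - U (n + 2) i) -
          ℓ (i - 1) * (U (n + 2) i - U (n + 2) (i - 1))) -
        (1 / 2) * (ℓ i * (U n (i + 1) - U n i) -
          ℓ (i - 1) * (U n i - U n (i - 1))) =
        rhsKV δ Δt h Nα N (U (n + 2)) (U n) i) :
    ∀ n,
      energyImp Δt hi ℓ Nmax (U (n + 1)) (U (n + 2)) -
          energyImp Δt hi ℓ Nmax (U n) (U (n + 1)) =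
        -(δ * Δt * h) * ∑ i ∈ Icc (Nα + 1) (Nα + N - 1),
          ((U (n + 2) (i + 1) - U (n + 2) i - U n (i + 1) + U n i) /
              (2 * Δt * h)) ^ 2 ∧
      energyImp Δt hi ℓ Nmax (U (n + 1)) (U (n + 2)) ≤
        energyImp Δt hi ℓ Nmax (U n) (U (n + 1)) :=
  implicit_scheme_energy_dissipation_general Nmax Nα N hNN hsum Δt δ h hΔt hδ hh hi ℓ U hbd hscheme
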